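/- arXiv:1212.6742 — 2 statements merged into one kernel-verified Lean document; each statement's English description precedes it below -/
import Mathlib

section
/- The map S(p) is invariant under Rauzy moves: if p is irreducible and q = ε p for ε ∈ {0,1}, then S(q) = S(p). Consequently S(q) = S(p) for every q in the Rauzy class of p. -/
/-- A "pair" on a finite alphabet `A`: two bijections (rows) from `A`
to positions `Fin (card A)` (position `i` represents the value `i+1`). -/
structure RPair (A : Type*) [Fintype A] where
  p : Fin 2 → A ≃ Fin (Fintype.card A)

variable {A : Type*} [Fintype A]

/-- The Rauzy move of type `ε`, as a relation: `Q = ε • P`. Row `ε` is fixed;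
in row `1-ε` the last entry is cycled to just after the letter `z` occupying the
last position of row `ε` (0-indexed positions). -/
def Rmove (ε : Fin 2) (P Q : RPair A) : Prop :=
  Q.p ε = P.p ε ∧
  ∀ z : A, ((P.p ε) z).val = Fintype.card A - 1 →
    ∀ b : A, ((Q.p (1 - ε)) b).val =
      if ((P.p (1 - ε)) b).val ≤ ((P.p (1 - ε)) z).val then ((P.p (1 - ε)) b).val
      else if ((P.p (1 - ε)) b).val < Fintype.card A - 1 then ((P.p (1 - ε)) b).val + 1
      else ((P.p (1 - ε)) z).val + 1

/-- A pair is irreducible if its two rows never occupy the first `k` positions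
with the same set of letters, for `0 < k < card A`. -/
def IrreduciblePair (P : RPair A) : Prop :=
  ∀ k : ℕ, 0 < k → k < Fintype.card A →
    {a : A | ((P.p 0) a).val < k} ≠ {a : A | ((P.p 1) a).val < k}

/-- A pair is standard if the first letter of each row is the last letter of the other. -/
def StandardPair (P : RPair A) : Prop :=
  (∀ a : A, ((P.p 0) a).val = 0 → ((P.p 1) a).val = Fintype.card A - 1) ∧
  (∀ z : A, ((P.p 1) z).val = 0 → ((P.p 0) z).val = Fintype.card A - 1)

/-- `Q` is reachable from `P` by finitely many Rauzy moves. -/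
def InRauzyClass (P Q : RPair A) : Prop :=
  Relation.ReflTransGen (fun X Y : RPair A => ∃ ε, Rmove ε X Y) P Q

section Smap

variable {A : Type*} [Fintype A] [Nonempty A]

/-- The first position (value `1`). -/
def fin0 (A : Type*) [Fintype A] [Nonempty A] : Fin (Fintype.card A) :=
  ⟨0, Fintype.card_pos⟩

/-- The last position (value `#A`). -/
def finLast (A : Type*) [Fintype A] [Nonempty A] : Fin (Fintype.card A) :=
  ⟨Fintype.card A - 1, Nat.sub_lt Fintype.card_pos Nat.one_pos⟩

/-- Successor position (cyclically, to make it total). -/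
def finSucc (i : Fin (Fintype.card A)) : Fin (Fintype.card A) :=
  ⟨(i.val + 1) % Fintype.card A, Nat.mod_lt _ Fintype.card_pos⟩

/-- Predecessor position (truncated, to make it total). -/
def finPred {n : ℕ} (i : Fin n) : Fin n :=
  ⟨i.val - 1, lt_of_le_of_lt (Nat.sub_le _ _) i.isLt⟩

/-- The map `S(p) : A → A`:
`S(p)(α) = p0⁻¹(1)` if `p1(α) = 1`;
`S(p)(α) = p0⁻¹(p0(p1⁻¹(#A)) + 1)` if `p1(α) = p1(p0⁻¹(#A)) + 1`;
`S(p)(α) = p0⁻¹(p0(p1⁻¹(p1(α) - 1)) + 1)` otherwise. -/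
def Smap (P : RPair A) : A → A := fun α =>
  if ((P.p 1) α).val = 0 then (P.p 0).symm (fin0 A)
  else if ((P.p 1) α).val = ((P.p 1) ((P.p 0).symm (finLast A))).val + 1 then
    (P.p 0).symm (finSucc ((P.p 0) ((P.p 1).symm (finLast A))))
  else
    (P.p 0).symm (finSucc ((P.p 0) ((P.p 1).symm (finPred ((P.p 1) α)))))

end Smap

/-!
Write `a = P.p 0` and `b = P.p 1`. Then `Smap P α` is the row-`0` successor of the letter at
row-`1` position `pivotPos t (b α)`, where `t` is the row-`1` position of the last letter of
row `0`. A move of type `0` keeps `a` and `t` and replaces `b` by `rauzyShift t ∘ b`; since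
`rauzyShift t` commutes with `pivotPos t`, `Smap` does not change. For a move of type `1`, swap
the rows: it becomes a move of type `0`, and `Smap` of the swapped pair is a left inverse of
`Smap P`. Two self-maps of a finite set with a common left inverse coincide.
-/

def rauzyShift {n : ℕ} (t j : Fin n) : Fin n :=
  ⟨if j.val ≤ t.val then j.val else if j.val < n - 1 then j.val + 1 else t.val + 1, by
    have := j.isLt; split_ifs <;> omega⟩

theorem rauzyShift_self {n : ℕ} (t : Fin n) : rauzyShift t t = t := by
  ext; simp [rauzyShift]

theorem Rmove.apply_eq_rauzyShift {ε : Fin 2} {P Q : RPair A} (h : Rmove ε P Q) {z : A}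
    (hz : ((P.p ε) z).val = Fintype.card A - 1) (b : A) :
    (Q.p (1 - ε)) b = rauzyShift ((P.p (1 - ε)) z) ((P.p (1 - ε)) b) :=
  Fin.ext (h.2 z hz b)

def RPair.swap (P : RPair A) : RPair A := ⟨![P.p 1, P.p 0]⟩

@[simp] theorem RPair.swap_p_zero (P : RPair A) : P.swap.p 0 = P.p 1 := rfl

@[simp] theorem RPair.swap_p_one (P : RPair A) : P.swap.p 1 = P.p 0 := rfl

theorem Rmove.swap {P Q : RPair A} (h : Rmove 1 P Q) : Rmove 0 P.swap Q.swap := h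

theorem Function.LeftInverse.eq_of_finite {α : Type*} [Finite α] {f₁ f₂ g : α → α}
    (h₁ : Function.LeftInverse g f₁) (h₂ : Function.LeftInverse g f₂) : f₁ = f₂ :=
  funext fun x =>
    (Finite.injective_iff_surjective.mpr h₁.surjective) ((h₁ x).trans (h₂ x).symm)

section

variable [Nonempty A]

theorem finSucc_val_of_lt {i : Fin (Fintype.card A)} (hi : i.val + 1 < Fintype.card A) :
    (finSucc i).val = i.val + 1 :=
  Nat.mod_eq_of_lt hi

theorem finSucc_finLast : finSucc (finLast A) = fin0 A := by
  ext; simp [finSucc, finLast, fin0, Nat.sub_add_cancel Fintype.card_pos]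

theorem finPred_finSucc {i : Fin (Fintype.card A)} (hi : i.val + 1 < Fintype.card A) :
    finPred (finSucc i) = i :=
  Fin.ext (by simp [finPred, finSucc_val_of_lt hi])

theorem finSucc_finPred {i : Fin (Fintype.card A)} (hi : i.val ≠ 0) : finSucc (finPred i) = i :=
  Fin.ext (by rw [finSucc_val_of_lt (by simp only [finPred]; omega)]; simp only [finPred]; omega)

def pivotPos (t j : Fin (Fintype.card A)) : Fin (Fintype.card A) :=
  if j.val = 0 then t else if j.val = t.val + 1 then finLast A else finPred j

theorem pivotPos_of_val_eq_zero {t j : Fin (Fintype.card A)} (h : j.val = 0) :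
    pivotPos t j = t :=
  if_pos h

theorem pivotPos_of_val_eq_succ {t j : Fin (Fintype.card A)} (h : j.val = t.val + 1) :
    pivotPos t j = finLast A := by
  rw [pivotPos, if_neg (by omega), if_pos h]

theorem pivotPos_of_ne {t j : Fin (Fintype.card A)} (h₀ : j.val ≠ 0) (h : j.val ≠ t.val + 1) :
    pivotPos t j = finPred j := by
  rw [pivotPos, if_neg h₀, if_neg h]

theorem pivotPos_rauzyShift (t j : Fin (Fintype.card A)) :
    pivotPos t (rauzyShift t j) = rauzyShift t (pivotPos t j) := by
  ext
  unfold pivotPos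
  simp only [rauzyShift, apply_ite Fin.val, finLast, finPred]
  grind

theorem Smap_eq_pivotPos (P : RPair A) (α : A) :
    Smap P α = (P.p 0).symm (finSucc ((P.p 0) ((P.p 1).symm
      (pivotPos ((P.p 1) ((P.p 0).symm (finLast A))) ((P.p 1) α))))) := by
  unfold Smap pivotPos
  split_ifs
  · simp [finSucc_finLast]
  · rfl
  · rfl

theorem Smap_eq_of_rmove_zero {P Q : RPair A} (h : Rmove 0 P Q) : Smap Q = Smap P := by
  set t := (P.p 1) ((P.p 0).symm (finLast A))
  have hshift : ∀ x, (Q.p 1) x = rauzyShift t ((P.p 1) x) :=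
    h.apply_eq_rauzyShift (by simp [finLast])
  have hsymm : ∀ j, (Q.p 1).symm (rauzyShift t j) = (P.p 1).symm j := fun j => by
    rw [Equiv.symm_apply_eq, hshift, Equiv.apply_symm_apply]
  funext α
  rw [Smap_eq_pivotPos, Smap_eq_pivotPos, h.1, hshift, hshift, rauzyShift_self,
    pivotPos_rauzyShift, hsymm]

theorem finSucc_symm_pivotPos_finSucc_pivotPos (π : Equiv.Perm (Fin (Fintype.card A)))
    (j : Fin (Fintype.card A)) :
    finSucc (π.symm (pivotPos (π (finLast A))
      (finSucc (π (pivotPos (π.symm (finLast A)) j))))) = j := by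
  set t := π.symm (finLast A) with ht
  set s := π (finLast A)
  have hj := j.isLt
  by_cases hj₀ : j.val = 0
  · rw [pivotPos_of_val_eq_zero hj₀, π.apply_symm_apply, finSucc_finLast,
      pivotPos_of_val_eq_zero rfl, π.symm_apply_apply, finSucc_finLast]
    exact Fin.ext hj₀.symm
  by_cases hjt : j.val = t.val + 1
  · have hs : s.val + 1 < Fintype.card A := by
      by_contra hs
      have hπ : s = finLast A := Fin.ext (by have := s.isLt; simp only [finLast]; omega)
      have : t = finLast A := by rw [ht, π.symm_apply_eq]; exact hπ.symm
      have := congrArg Fin.val this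
      simp only [finLast] at this
      omega
    rw [pivotPos_of_val_eq_succ hjt, pivotPos_of_val_eq_succ (finSucc_val_of_lt hs), ← ht]
    exact Fin.ext (by rw [finSucc_val_of_lt (by omega)]; exact hjt.symm)
  have hpred : (finPred j).val = j.val - 1 := rfl
  have hπ : (π (finPred j)).val + 1 < Fintype.card A := by
    by_contra hπ
    have : π (finPred j) = finLast A :=
      Fin.ext (by have := (π (finPred j)).isLt; simp only [finLast]; omega)
    have := congrArg Fin.val (π.eq_symm_apply.mpr this)
    omega
  have hs : (finSucc (π (finPred j))).val ≠ s.val + 1 := by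
    rw [finSucc_val_of_lt hπ]
    intro h
    have := congrArg Fin.val (π.injective (Fin.ext (by omega)) : finPred j = finLast A)
    simp only [finLast] at this
    omega
  rw [pivotPos_of_ne hj₀ hjt, pivotPos_of_ne (by rw [finSucc_val_of_lt hπ]; omega) hs,
    finPred_finSucc hπ, π.symm_apply_apply, finSucc_finPred hj₀]

theorem Smap_swap_leftInverse (P : RPair A) : Function.LeftInverse (Smap P.swap) (Smap P) := by
  intro α
  rw [Smap_eq_pivotPos P, Smap_eq_pivotPos P.swap]
  simp only [RPair.swap_p_zero, RPair.swap_p_one, Equiv.apply_symm_apply, Equiv.symm_apply_eq]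
  exact finSucc_symm_pivotPos_finSucc_pivotPos ((P.p 1).symm.trans (P.p 0)) _

theorem Smap_eq_of_rmove_one {P Q : RPair A} (h : Rmove 1 P Q) : Smap Q = Smap P := by
  have hQ := Smap_swap_leftInverse Q
  rw [Smap_eq_of_rmove_zero h.swap] at hQ
  exact hQ.eq_of_finite (Smap_swap_leftInverse P)

theorem Smap_eq_of_rmove {ε : Fin 2} {P Q : RPair A} (h : Rmove ε P Q) : Smap Q = Smap P := by
  fin_cases ε
  · exact Smap_eq_of_rmove_zero h
  · exact Smap_eq_of_rmove_one h

end

theorem Smap_rauzy_invariant_general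
    {A : Type*} [Fintype A] [Nonempty A] (P : RPair A) :
    (∀ (ε : Fin 2) (Q : RPair A), Rmove ε P Q → Smap Q = Smap P) ∧
    (∀ Q : RPair A, InRauzyClass P Q → Smap Q = Smap P) := by
  refine ⟨fun ε Q => Smap_eq_of_rmove, fun Q hQ => ?_⟩
  induction hQ with
  | refl => rfl
  | tail _ hstep ih =>
    obtain ⟨ε, h⟩ := hstep
    rw [Smap_eq_of_rmove h, ih]

/-- `S` is invariant under Rauzy moves, hence constant on Rauzy classes. -/
theorem Smap_rauzy_invariant
    {A : Type*} [Fintype A] [Nonempty A] (P : RPair A) (hP : IrreduciblePair P) :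
    (∀ (ε : Fin 2) (Q : RPair A), Rmove ε P Q → Smap Q = Smap P) ∧
    (∀ Q : RPair A, InRauzyClass P Q → Smap Q = Smap P) :=
  Smap_rauzy_invariant_general P
end

section
/- For any irreducible pair p on A, the cycle distance from p to the set of standard pairs is at most #A − 2; that is, p can be connected to a standard pair by a Rauzy path consisting of at most #A − 2 maximal monotone cycles (maximal runs of consecutive moves of a single type). -/
variable {A : Type*} [Fintype A]

/-- `k`-fold iteration of the type-`ε` Rauzy move, as a relation. -/
def RmoveIter {A : Type*} [Fintype A] (ε : Fin 2) : ℕ → RPair A → RPair A → Prop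
  | 0 => fun P Q => Q = P
  | (k + 1) => fun P Q => ∃ R, Rmove ε P R ∧ RmoveIter ε k R Q

/-- `CyclesPath m P Q`: `Q` is reachable from `P` by a Rauzy path consisting of
`m` (monotone) cycles, each a positive number of moves of a single type. -/
def CyclesPath {A : Type*} [Fintype A] : ℕ → RPair A → RPair A → Prop
  | 0 => fun P Q => Q = P
  | (m + 1) => fun P Q => ∃ (ε : Fin 2) (k : ℕ) (R : RPair A),
      0 < k ∧ RmoveIter ε k P R ∧ CyclesPath m R Q

/-!
Encode a pair by the permutation `σ` sending the position of a letter in row 0 to its position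
in row 1, and write `a = σ 0`, `b = σ⁻¹ 0`, `s = σ ⊤`, `u = σ⁻¹ ⊤`; the pair is standard iff
`a = b = ⊤`. A type-0 cycle of length `k` replaces `σ` by `ρ ^ k * σ`, where `ρ` rotates the
positions above `s` (type 1 is the same after swapping the rows, which inverts `σ`). It fixes
`s`, `b`, and `a` if `a < s`, and it can bring any position above `s` to `⊤`. So one cycle makes
the pair standard when `s = 0`, and two cycles suffice when `s < a`. Otherwise `a < s` and
`b < u`, and irreducibility provides a cycle of one of the two types that keeps `a`, `b` and one
of `s`, `u`, and lowers the other by at least two; iterating costs at most `(s + u - a - b) / 2`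
cycles before the previous case is reached. Irreducibility also gives `1 ≤ a, b`, `3 ≤ a + b`,
`s, u ≤ #A - 2` and `s + u ≤ 2 #A - 5`, which bounds every count by `#A - 2`.
-/

open Equiv Function

namespace Rauzy

variable {N : ℕ}

def rotAboveFun (t : ℕ) (x : Fin N) : Fin N :=
  if hx : x.val ≤ t then x
  else if h : x.val + 1 < N then ⟨x.val + 1, h⟩
  else ⟨t + 1, by omega⟩

theorem rotAboveFun_val (t : ℕ) (x : Fin N) :
    (rotAboveFun t x).val =
      if x.val ≤ t then x.val else if x.val < N - 1 then x.val + 1 else t + 1 := by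
  unfold rotAboveFun
  split_ifs <;> simp <;> omega

theorem rotAboveFun_injective (t : ℕ) : Injective (rotAboveFun (N := N) t) := by
  intro x y hxy
  have h := congrArg Fin.val hxy
  rw [rotAboveFun_val, rotAboveFun_val] at h
  ext
  split_ifs at h <;> omega

/-- A Rauzy move of type `ε` applies this to row `1 - ε`, where `t` is the position in that row
of the last letter of row `ε`. -/
noncomputable def rotAbove (t : ℕ) : Perm (Fin N) :=
  Equiv.ofBijective _ (rotAboveFun_injective t).bijective_of_finite

theorem rotAbove_val (t : ℕ) (x : Fin N) :
    (rotAbove t x).val =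
      if x.val ≤ t then x.val else if x.val < N - 1 then x.val + 1 else t + 1 :=
  rotAboveFun_val t x

theorem rotAbove_of_le {t : ℕ} {x : Fin N} (hx : x.val ≤ t) : rotAbove t x = x :=
  Fin.ext (by rw [rotAbove_val, if_pos hx])

theorem rotAbove_pow_of_le {t : ℕ} {x : Fin N} (hx : x.val ≤ t) (k : ℕ) :
    (rotAbove t ^ k) x = x := by
  induction k with
  | zero => rfl
  | succ k ih => rw [pow_succ, Perm.mul_apply, rotAbove_of_le hx, ih]

theorem rotAbove_pow_inv_of_le {t : ℕ} {x : Fin N} (hx : x.val ≤ t) (k : ℕ) :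
    (rotAbove t ^ k)⁻¹ x = x :=
  Perm.inv_eq_iff_eq.mpr (rotAbove_pow_of_le hx k).symm

theorem rotAbove_pow_le_iff {t : ℕ} (k : ℕ) (x : Fin N) :
    ((rotAbove t ^ k) x).val ≤ t ↔ x.val ≤ t := by
  refine ⟨fun h => ?_, fun h => by rwa [rotAbove_pow_of_le h]⟩
  have hfix := rotAbove_pow_of_le h k
  rwa [(rotAbove t ^ k).injective hfix] at h

theorem rotAbove_pow_val {t : ℕ} {q : Fin N} (hq : t < q.val) {j : ℕ} (hj : q.val + j < N) :
    ((rotAbove t ^ j) q).val = q.val + j := by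
  induction j with
  | zero => rfl
  | succ j ih =>
    rw [pow_succ', Perm.mul_apply, rotAbove_val, ih (by omega)]
    split_ifs <;> omega

theorem rotAbove_pow_eq_top [NeZero N] {t : ℕ} {q : Fin N} (hq : t < q.val) :
    (rotAbove t ^ (N - 1 - q.val)) q = ⊤ := by
  rw [Fin.ext_iff, rotAbove_pow_val hq (by omega), Fin.val_top]
  omega

theorem rotAbove_pow_inv_top [NeZero N] {t : ℕ} {q : Fin N} (hq : t < q.val) :
    (rotAbove t ^ (N - 1 - q.val))⁻¹ ⊤ = q :=
  Perm.inv_eq_iff_eq.mpr (rotAbove_pow_eq_top hq).symm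

theorem val_apply_ne (σ : Perm (Fin N)) {x y : Fin N} (h : x.val ≠ y.val) :
    (σ x).val ≠ (σ y).val :=
  Fin.val_ne_of_ne (σ.injective.ne (Fin.ne_of_val_ne h))

theorem val_apply_ne_sub_one [NeZero N] (σ : Perm (Fin N)) {x : Fin N}
    (h : x.val ≠ (σ⁻¹ ⊤).val) : (σ x).val ≠ N - 1 := by
  simpa using val_apply_ne σ h

theorem val_lt_of_ne_top [NeZero N] {x : Fin N} (h : x ≠ ⊤) : x.val < N - 1 := by
  rw [← Fin.val_top N]
  exact Fin.lt_def.mp (lt_top_iff_ne_top.mpr h)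

theorem lt_iff_of_mapsTo {σ : Perm (Fin N)} {k : ℕ}
    (h : ∀ x : Fin N, x.val < k → (σ x).val < k) (x : Fin N) : (σ x).val < k ↔ x.val < k := by
  refine ⟨fun hx => ?_, h x⟩
  have hbij := ((Set.toFinite {y : Fin N | y.val < k}).injOn_iff_bijOn_of_mapsTo h).mp
    σ.injective.injOn
  obtain ⟨y, hy, hyx⟩ := hbij.surjOn hx
  rwa [← σ.injective hyx]

theorem apply_lt_of_forall_not_lowering [NeZero N] {σ : Perm (Fin N)}
    (hno : ∀ v : Fin N, (σ ⊤).val < v.val → v.val < N - 1 → (σ⁻¹ ⊤).val < (σ⁻¹ v).val + 2)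
    {x : Fin N} (hx : x.val + 1 < (σ⁻¹ ⊤).val) : (σ x).val < (σ ⊤).val := by
  have hu := (σ⁻¹ ⊤).isLt
  have h_ne_s := val_apply_ne σ (x := x) (y := ⊤) (by rw [Fin.val_top]; omega)
  have h_ne_top := val_apply_ne_sub_one σ (x := x) (by omega)
  by_contra h
  have := hno (σ x) (by omega) (by have := (σ x).isLt; omega)
  rw [show σ⁻¹ (σ x) = x from σ.symm_apply_apply x] at this
  omega

def Indecomposable (σ : Perm (Fin N)) : Prop :=
  ∀ k : ℕ, 0 < k → k < N → ¬ ∀ x : Fin N, x.val < k → (σ x).val < k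

namespace Indecomposable

variable {σ : Perm (Fin N)}

theorem inv (hσ : Indecomposable σ) : Indecomposable σ⁻¹ := fun k hk hkN hmaps =>
  hσ k hk hkN fun x hx => (lt_iff_of_mapsTo hmaps (σ x)).mp (by simpa using hx)

theorem rotAbove_pow_mul [NeZero N] (hσ : Indecomposable σ) (k : ℕ) :
    Indecomposable (rotAbove (σ ⊤).val ^ k * σ) := by
  intro m hm hmN hmaps
  by_cases hmt : m ≤ (σ ⊤).val + 1
  · refine hσ m hm hmN fun x hx => ?_
    have hlt := hmaps x hx
    rw [Perm.mul_apply] at hlt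
    by_cases hxt : (σ x).val ≤ (σ ⊤).val
    · rwa [rotAbove_pow_of_le hxt] at hlt
    · have := (rotAbove_pow_le_iff k (σ x)).not.mpr hxt
      omega
  · have htop := (lt_iff_of_mapsTo hmaps ⊤).mp
      (by rw [Perm.mul_apply, rotAbove_pow_of_le le_rfl]; omega)
    rw [Fin.val_top] at htop
    omega

variable (hσ : Indecomposable σ)
include hσ

theorem apply_zero_pos [NeZero N] (hN : 1 < N) : 0 < (σ 0).val := by
  by_contra h
  refine hσ 1 one_pos hN fun x hx => ?_
  rw [show x = 0 from Fin.ext (by simpa using hx)]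
  omega

theorem apply_top_lt [NeZero N] (hN : 1 < N) : (σ ⊤).val < N - 1 := by
  by_contra h
  refine hσ (N - 1) (by omega) (by omega) fun x hx => ?_
  have h_ne_s : (σ x).val ≠ (σ ⊤).val := val_apply_ne σ (by rw [Fin.val_top]; omega)
  have := (σ x).isLt
  have := (σ ⊤).isLt
  omega

theorem three_le_apply_zero_add_inv_apply_zero [NeZero N] (hN : 2 < N) :
    3 ≤ (σ 0).val + (σ⁻¹ 0).val := by
  have ha := hσ.apply_zero_pos (by omega)
  have hb := hσ.inv.apply_zero_pos (by omega)
  by_contra h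
  refine hσ 2 two_pos hN fun x hx => ?_
  rcases (by omega : x.val = 0 ∨ x.val = 1) with hx0 | hx1
  · rw [show x = 0 from Fin.ext hx0]
    omega
  · rw [Perm.eq_inv_iff_eq.mp (Fin.ext (by omega) : x = σ⁻¹ 0)]
    simp

theorem apply_top_add_inv_apply_top_add_five_le [NeZero N] (hN : 2 < N) :
    (σ ⊤).val + (σ⁻¹ ⊤).val + 5 ≤ 2 * N := by
  have hs := hσ.apply_top_lt (by omega)
  have hu := hσ.inv.apply_top_lt (by omega)
  by_contra h
  refine hσ (N - 2) (by omega) (by omega) fun x hx => ?_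
  have h_ne_s := val_apply_ne σ (x := x) (y := ⊤) (by rw [Fin.val_top]; omega)
  have h_ne_top := val_apply_ne_sub_one σ (x := x) (by omega)
  have := (σ x).isLt
  omega

theorem exists_lowering_of_le [NeZero N] (hs : 2 ≤ (σ ⊤).val)
    (hsu : (σ ⊤).val ≤ (σ⁻¹ ⊤).val) :
    (∃ v : Fin N, (σ ⊤).val < v.val ∧ v.val < N - 1 ∧ (σ⁻¹ v).val + 2 ≤ (σ⁻¹ ⊤).val) ∨
      ∃ q : Fin N, (σ⁻¹ ⊤).val < q.val ∧ q.val < N - 1 ∧ (σ q).val + 2 ≤ (σ ⊤).val := by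
  by_contra! h
  obtain ⟨hno, hno'⟩ := h
  have hu := (σ⁻¹ ⊤).isLt
  rcases hsu.lt_or_eq with hlt | heq
  · exact hσ _ (by omega) (by omega) fun x hx =>
      apply_lt_of_forall_not_lowering hno (by omega)
  · have hpred : (σ⁻¹ ⊤).val - 1 < N := by omega
    by_cases hmid : (σ ⟨_, hpred⟩).val < (σ⁻¹ ⊤).val
    · refine hσ _ (by omega) hu fun x hx => ?_
      rcases (by omega : x.val + 1 < (σ⁻¹ ⊤).val ∨ x.val = (σ⁻¹ ⊤).val - 1) with hx | hx
      · have := apply_lt_of_forall_not_lowering hno hx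
        omega
      · rwa [show x = ⟨_, hpred⟩ from Fin.ext hx]
    · refine hσ.inv _ (by omega) hpred fun y hy => ?_
      have hno'' : ∀ q : Fin N, (σ⁻¹ ⊤).val < q.val → q.val < N - 1 →
          (σ⁻¹⁻¹ ⊤).val < (σ⁻¹⁻¹ q).val + 2 := by simpa using hno'
      have hlt := apply_lt_of_forall_not_lowering hno'' (x := y) (by simp; omega)
      have hne : (σ⁻¹ y).val ≠ (σ⁻¹ ⊤).val - 1 := fun h => by
        rw [Perm.inv_eq_iff_eq.mp (Fin.ext h : σ⁻¹ y = ⟨_, hpred⟩)] at hy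
        omega
      omega

theorem exists_lowering [NeZero N] (hs : 2 ≤ (σ ⊤).val) (hu : 2 ≤ (σ⁻¹ ⊤).val) :
    (∃ v : Fin N, (σ ⊤).val < v.val ∧ v.val < N - 1 ∧ (σ⁻¹ v).val + 2 ≤ (σ⁻¹ ⊤).val) ∨
      ∃ q : Fin N, (σ⁻¹ ⊤).val < q.val ∧ q.val < N - 1 ∧ (σ q).val + 2 ≤ (σ ⊤).val := by
  rcases le_total (σ ⊤).val (σ⁻¹ ⊤).val with hsu | hus
  · exact hσ.exists_lowering_of_le hs hsu
  · simpa only [inv_inv, or_comm] using hσ.inv.exists_lowering_of_le hu (by simpa using hus)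

end Indecomposable

end Rauzy

open Rauzy

namespace RPair

theorem ext {P Q : RPair A} (h : P.p = Q.p) : P = Q := by
  cases P
  cases Q
  congr

def swap_s9 (P : RPair A) : RPair A := ⟨fun δ => P.p (1 - δ)⟩

@[simp] theorem swap_p (P : RPair A) (δ : Fin 2) : P.swap_s9.p δ = P.p (1 - δ) := rfl

@[simp] theorem swap_swap (P : RPair A) : P.swap_s9.swap_s9 = P :=
  ext (funext fun δ => by simp)

end RPair

theorem Rmove.swap_s9 {ε : Fin 2} {P Q : RPair A} (h : Rmove ε P Q) :
    Rmove (1 - ε) P.swap_s9 Q.swap_s9 := by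
  simpa [Rmove] using h

theorem RmoveIter.swap_s9 {ε : Fin 2} {k : ℕ} {P Q : RPair A} (h : RmoveIter ε k P Q) :
    RmoveIter (1 - ε) k P.swap_s9 Q.swap_s9 := by
  induction k generalizing P with
  | zero => exact congrArg RPair.swap_s9 h
  | succ k ih =>
    obtain ⟨R, hPR, hRQ⟩ := h
    exact ⟨R.swap_s9, hPR.swap_s9, ih hRQ⟩

theorem CyclesPath.swap_s9 {m : ℕ} {P Q : RPair A} (h : CyclesPath m P Q) :
    CyclesPath m P.swap_s9 Q.swap_s9 := by
  induction m generalizing P with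
  | zero => exact congrArg RPair.swap_s9 h
  | succ m ih =>
    obtain ⟨ε, k, R, hk, hPR, hRQ⟩ := h
    exact ⟨1 - ε, k, R.swap_s9, hk, hPR.swap_s9, ih hRQ⟩

theorem StandardPair.swap_s9 {P : RPair A} (h : StandardPair P) : StandardPair P.swap_s9 := by
  simpa [StandardPair, and_comm] using h

namespace RPair

def perm (P : RPair A) : Perm (Fin (Fintype.card A)) := (P.p 0).symm.trans (P.p 1)

@[simp] theorem perm_swap (P : RPair A) : P.swap_s9.perm = P.perm⁻¹ := rfl

theorem indecomposable_perm {P : RPair A} (hP : IrreduciblePair P) :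
    Indecomposable P.perm := by
  intro k hk hkA hmaps
  refine hP k hk hkA (Set.ext fun a => ?_)
  simpa [perm] using (lt_iff_of_mapsTo hmaps (P.p 0 a)).symm

def ReachesStandard (b : ℕ) (P : RPair A) : Prop :=
  ∃ m ≤ b, ∃ Q : RPair A, StandardPair Q ∧ CyclesPath m P Q

theorem ReachesStandard.mono {b b' : ℕ} {P : RPair A} (hb : b ≤ b')
    (h : ReachesStandard b P) : ReachesStandard b' P :=
  let ⟨m, hm, Q, hQ, hPQ⟩ := h
  ⟨m, hm.trans hb, Q, hQ, hPQ⟩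

theorem ReachesStandard.of_swap {b : ℕ} {P : RPair A} (h : ReachesStandard b P.swap_s9) :
    ReachesStandard b P :=
  let ⟨m, hm, Q, hQ, hPQ⟩ := h
  ⟨m, hm, Q.swap_s9, hQ.swap_s9, by simpa using hPQ.swap_s9⟩

theorem _root_.StandardPair.reachesStandard {P : RPair A} (h : StandardPair P) :
    ReachesStandard 0 P :=
  ⟨0, le_rfl, P, h, rfl⟩

variable [NeZero (Fintype.card A)]

theorem standardPair_of_perm {P : RPair A} (h0 : P.perm 0 = ⊤) (h1 : P.perm⁻¹ 0 = ⊤) :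
    StandardPair P := by
  refine ⟨fun a ha => ?_, fun z hz => ?_⟩
  · rw [← (P.p 0).symm_apply_apply a, show P.p 0 a = 0 from Fin.ext ha]
    exact congrArg Fin.val h0
  · rw [← (P.p 1).symm_apply_apply z, show P.p 1 z = 0 from Fin.ext hz]
    exact congrArg Fin.val h1

noncomputable def cycleZero (P : RPair A) (k : ℕ) : RPair A :=
  ⟨![P.p 0, (P.p 1).trans (rotAbove (P.perm ⊤).val ^ k)]⟩

@[simp] theorem cycleZero_p_one (P : RPair A) (k : ℕ) :
    (P.cycleZero k).p 1 = (P.p 1).trans (rotAbove (P.perm ⊤).val ^ k) := rfl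

theorem perm_cycleZero (P : RPair A) (k : ℕ) :
    (P.cycleZero k).perm = rotAbove (P.perm ⊤).val ^ k * P.perm := by
  ext x
  simp [cycleZero, perm, Perm.mul_apply]

theorem cycleZero_zero (P : RPair A) : P.cycleZero 0 = P := by
  refine ext (funext fun δ => ?_)
  fin_cases δ <;> rfl

theorem perm_cycleZero_apply_of_le {P : RPair A} {x : Fin (Fintype.card A)}
    (hx : (P.perm x).val ≤ (P.perm ⊤).val) (k : ℕ) : (P.cycleZero k).perm x = P.perm x := by
  rw [perm_cycleZero, Perm.mul_apply, rotAbove_pow_of_le hx]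

theorem perm_cycleZero_inv_apply_of_le {P : RPair A} {y : Fin (Fintype.card A)}
    (hy : y.val ≤ (P.perm ⊤).val) (k : ℕ) : (P.cycleZero k).perm⁻¹ y = P.perm⁻¹ y := by
  rw [perm_cycleZero, mul_inv_rev, Perm.mul_apply, rotAbove_pow_inv_of_le hy]

theorem perm_cycleZero_apply_eq_top {P : RPair A} {x : Fin (Fintype.card A)}
    (hx : (P.perm ⊤).val < (P.perm x).val) :
    (P.cycleZero (Fintype.card A - 1 - (P.perm x).val)).perm x = ⊤ := by
  rw [perm_cycleZero, Perm.mul_apply, rotAbove_pow_eq_top hx]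

theorem perm_cycleZero_inv_top {P : RPair A} {v : Fin (Fintype.card A)}
    (hv : (P.perm ⊤).val < v.val) :
    (P.cycleZero (Fintype.card A - 1 - v.val)).perm⁻¹ ⊤ = P.perm⁻¹ v := by
  rw [perm_cycleZero, mul_inv_rev, Perm.mul_apply, rotAbove_pow_inv_top hv]

theorem cycleZero_succ (P : RPair A) (k : ℕ) :
    P.cycleZero (k + 1) = (P.cycleZero 1).cycleZero k := by
  refine ext (funext fun δ => ?_)
  fin_cases δ
  · rfl
  · ext b
    simp [perm_cycleZero_apply_of_le (le_refl (P.perm ⊤).val), pow_succ]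

theorem rmove_cycleZero_one (P : RPair A) : Rmove 0 P (P.cycleZero 1) := by
  refine ⟨rfl, fun z hz b => ?_⟩
  have hz' : (P.p 0).symm ⊤ = z := (P.p 0).symm_apply_eq.mpr (Fin.ext (by rw [hz, Fin.val_top]))
  simp [cycleZero, perm, hz', rotAbove_val]

theorem rmoveIter_cycleZero (P : RPair A) (k : ℕ) : RmoveIter 0 k P (P.cycleZero k) := by
  induction k generalizing P with
  | zero => exact cycleZero_zero P
  | succ k ih => exact ⟨P.cycleZero 1, rmove_cycleZero_one P, cycleZero_succ P k ▸ ih _⟩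


theorem ReachesStandard.of_cycleZero {b k : ℕ} {P : RPair A} (hk : 0 < k)
    (h : ReachesStandard b (P.cycleZero k)) : ReachesStandard (b + 1) P :=
  let ⟨m, hm, Q, hQ, hPQ⟩ := h
  ⟨m + 1, by omega, Q, hQ, 0, k, _, hk, rmoveIter_cycleZero P k, hPQ⟩

theorem reachesStandard_one_of_perm_top_eq_zero {P : RPair A} (h : P.perm ⊤ = 0) :
    ReachesStandard 1 P := by
  have hb : P.perm⁻¹ 0 = ⊤ := Perm.inv_eq_iff_eq.mpr h.symm
  by_cases ha : P.perm 0 = ⊤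
  · exact (standardPair_of_perm ha hb).reachesStandard.mono zero_le_one
  have ha_lt := val_lt_of_ne_top ha
  have ha_pos : (P.perm ⊤).val < (P.perm 0).val := by
    have hne := val_apply_ne P.perm (x := 0) (y := ⊤) (by simp; omega)
    rw [h, Fin.val_zero] at hne ⊢
    omega
  refine ReachesStandard.of_cycleZero (k := Fintype.card A - 1 - (P.perm 0).val) (by omega)
    (standardPair_of_perm (perm_cycleZero_apply_eq_top ha_pos) ?_).reachesStandard
  rw [perm_cycleZero_inv_apply_of_le (by simp), hb]

theorem reachesStandard_one_of_perm_zero_eq_top {P : RPair A} (h : P.perm 0 = ⊤) :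
    ReachesStandard 1 P :=
  (reachesStandard_one_of_perm_top_eq_zero (by rw [perm_swap, Perm.inv_eq_iff_eq, h])).of_swap

theorem reachesStandard_two_of_perm_top_lt {P : RPair A}
    (h : (P.perm ⊤).val < (P.perm 0).val) : ReachesStandard 2 P := by
  by_cases ha : P.perm 0 = ⊤
  · exact (reachesStandard_one_of_perm_zero_eq_top ha).mono one_le_two
  have ha_lt := val_lt_of_ne_top ha
  exact (reachesStandard_one_of_perm_zero_eq_top (perm_cycleZero_apply_eq_top h)).of_cycleZero
    (by omega)


theorem reachesStandard_of_lowering {P : RPair A} (hP : Indecomposable P.perm)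
    (has : (P.perm 0).val < (P.perm ⊤).val) (hbu : (P.perm⁻¹ 0).val < (P.perm⁻¹ ⊤).val)
    {v : Fin (Fintype.card A)} (hsv : (P.perm ⊤).val < v.val) (hv : v.val < Fintype.card A - 1)
    (hvu : (P.perm⁻¹ v).val + 2 ≤ (P.perm⁻¹ ⊤).val)
    (IH : ∀ Q : RPair A, Indecomposable Q.perm → (Q.perm 0).val < (Q.perm ⊤).val →
      (Q.perm⁻¹ 0).val < (Q.perm⁻¹ ⊤).val →
      (Q.perm ⊤).val + (Q.perm⁻¹ ⊤).val < (P.perm ⊤).val + (P.perm⁻¹ ⊤).val →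
      ReachesStandard
        (((Q.perm ⊤).val + (Q.perm⁻¹ ⊤).val - (Q.perm 0).val - (Q.perm⁻¹ 0).val) / 2 + 2) Q) :
    ReachesStandard
      (((P.perm ⊤).val + (P.perm⁻¹ ⊤).val - (P.perm 0).val - (P.perm⁻¹ 0).val) / 2 + 2) P := by
  set Q := P.cycleZero (Fintype.card A - 1 - v.val)
  have hQ : Indecomposable Q.perm := by
    rw [perm_cycleZero]
    exact hP.rotAbove_pow_mul _
  have hQ0 : Q.perm 0 = P.perm 0 := perm_cycleZero_apply_of_le has.le _
  have hQtop : Q.perm ⊤ = P.perm ⊤ := perm_cycleZero_apply_of_le le_rfl _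
  have hQinv0 : Q.perm⁻¹ 0 = P.perm⁻¹ 0 := perm_cycleZero_inv_apply_of_le (by simp) _
  have hQinvtop : Q.perm⁻¹ ⊤ = P.perm⁻¹ v := perm_cycleZero_inv_top hsv
  have hne : (P.perm⁻¹ v).val ≠ (P.perm⁻¹ 0).val :=
    val_apply_ne P.perm⁻¹ (by rw [Fin.val_zero]; omega)
  rcases hne.lt_or_gt with hlt | hgt
  · have hQ2 : ReachesStandard 2 Q :=
      (reachesStandard_two_of_perm_top_lt (P := Q.swap_s9) (by simpa [hQinv0, hQinvtop])).of_swap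
    exact (hQ2.of_cycleZero (by omega)).mono (by omega)
  · have hQb := IH Q hQ (by rw [hQ0, hQtop]; exact has) (by rw [hQinv0, hQinvtop]; exact hgt)
      (by rw [hQtop, hQinvtop]; omega)
    rw [hQ0, hQtop, hQinv0, hQinvtop] at hQb
    exact (hQb.of_cycleZero (by omega)).mono (by omega)

theorem reachesStandard_of_lt_of_lt (P : RPair A) (hP : Indecomposable P.perm)
    (has : (P.perm 0).val < (P.perm ⊤).val) (hbu : (P.perm⁻¹ 0).val < (P.perm⁻¹ ⊤).val) :
    ReachesStandard
      (((P.perm ⊤).val + (P.perm⁻¹ ⊤).val - (P.perm 0).val - (P.perm⁻¹ 0).val) / 2 + 2) P := by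
  induction hm : (P.perm ⊤).val + (P.perm⁻¹ ⊤).val using Nat.strong_induction_on
    generalizing P with
  | _ m IH =>
  subst hm
  have hN : 1 < Fintype.card A := by have := (P.perm ⊤).isLt; omega
  have ha := hP.apply_zero_pos hN
  have hb := hP.inv.apply_zero_pos hN
  rcases hP.exists_lowering (by omega) (by omega) with ⟨v, hsv, hv, hvu⟩ | ⟨q, huq, hq, hqs⟩
  · exact reachesStandard_of_lowering hP has hbu hsv hv hvu
      fun Q hQ hQa hQb hlt => IH _ hlt Q hQ hQa hQb rfl
  · have hswap := reachesStandard_of_lowering (P := P.swap_s9) (v := q)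
      (by simpa only [perm_swap] using hP.inv) (by simpa only [perm_swap] using hbu)
      (by simpa only [perm_swap, inv_inv] using has) (by simpa only [perm_swap] using huq) hq
      (by simpa only [perm_swap, inv_inv] using hqs)
      fun Q hQ hQa hQb hlt => IH _ (by rw [perm_swap, inv_inv] at hlt; omega) Q hQ hQa hQb rfl
    rw [perm_swap, inv_inv] at hswap
    exact hswap.of_swap.mono (by omega)

theorem reachesStandard_card_sub_two (hA : 2 ≤ Fintype.card A) (P : RPair A)
    (hP : Indecomposable P.perm) : ReachesStandard (Fintype.card A - 2) P := by
  have ha := hP.apply_zero_pos (by omega)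
  have hb := hP.inv.apply_zero_pos (by omega)
  by_cases ha_top : P.perm 0 = ⊤
  · by_cases hb_top : P.perm⁻¹ 0 = ⊤
    · exact (standardPair_of_perm ha_top hb_top).reachesStandard.mono (Nat.zero_le _)
    · have := val_lt_of_ne_top hb_top
      exact (reachesStandard_one_of_perm_zero_eq_top ha_top).mono (by omega)
  have ha_lt := val_lt_of_ne_top ha_top
  by_cases hb_top : P.perm⁻¹ 0 = ⊤
  · exact (reachesStandard_one_of_perm_top_eq_zero (Perm.inv_eq_iff_eq.mp hb_top).symm).mono
      (by omega)
  have hb_lt := val_lt_of_ne_top hb_top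
  have hab := hP.three_le_apply_zero_add_inv_apply_zero (by omega)
  have hsu := hP.apply_top_add_inv_apply_top_add_five_le (by omega)
  have hne_a := val_apply_ne P.perm (x := 0) (y := ⊤) (by simp; omega)
  have hne_b := val_apply_ne P.perm⁻¹ (x := 0) (y := ⊤) (by simp; omega)
  rcases hne_a.lt_or_gt with has | hsa
  · rcases hne_b.lt_or_gt with hbu | hub
    · exact (reachesStandard_of_lt_of_lt P hP has hbu).mono (by omega)
    · exact (reachesStandard_two_of_perm_top_lt (P := P.swap_s9) (by simpa using hub)).of_swap.mono
        (by omega)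
  · exact (reachesStandard_two_of_perm_top_lt hsa).mono (by omega)

end RPair

/-- Any irreducible pair is connected to a standard pair by a Rauzy path of at
most `#A - 2` monotone cycles. -/
theorem dist_to_standard_le
    {A : Type*} [Fintype A] (hA : 2 ≤ Fintype.card A)
    (P : RPair A) (hP : IrreduciblePair P) :
    ∃ m : ℕ, m ≤ Fintype.card A - 2 ∧
      ∃ Q : RPair A, StandardPair Q ∧ CyclesPath m P Q := by
  have : NeZero (Fintype.card A) := ⟨by omega⟩
  exact RPair.reachesStandard_card_sub_two hA P (RPair.indecomposable_perm hP)
end
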